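/- Let π, π' be policies and let p, p' be transition kernels on a finite state-action space over horizon H. Let \hat{Q}_h(s,a) be arbitrary functions and define \hat{V}_h(s) = ⟨\hat{Q}_h(s,·), π_h(·|s)⟩ with \hat{V}_{H+1} ≡ 0. Let V_1^{π'}(s_1; r', p') be the value of π' under reward r' and kernel p'. Then V_1^{π'}(s_1; r', p') − \hat{V}_1(s_1) = ∑_{h=1}^H E_{π',p'}[⟨\hat{Q}_h(s_h,·), π'_h(·|s_h) − π_h(·|s_h)⟩ | s_1] + ∑_{h=1}^H E_{π',p'}[r'_h(s_h,a_h) + ∑_{s'} p'_h(s'|s_h,a_h)\hat{V}_{h+1}(s') − \hat{Q}_h(s_h,a_h) | s_1]. -/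
import Mathlib


open Finset

/-- Occupancy measure of policy `π'` under kernel `p'` started at `s1`:
`occup s1 π' p' k` is the state distribution at step `k+1`. -/
noncomputable def occup {S A : Type*} [Fintype S] [Fintype A] [DecidableEq S]
    (s1 : S) (π' : ℕ → S → A → ℝ) (p' : ℕ → S → A → S → ℝ) : ℕ → S → ℝ
  | 0 => fun s => if s = s1 then 1 else 0
  | (k+1) => fun s' => ∑ s, ∑ a, occup s1 π' p' k s * π' (k+1) s a * p' (k+1) s a s'

/-- Value of policy `π'` under reward `r'` and kernel `p'` with `j` steps
remaining out of horizon `H` (so `valRem H π' p' r' H s` is `V_1^{π'}(s; r', p')`). -/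
noncomputable def valRem {S A : Type*} [Fintype S] [Fintype A]
    (H : ℕ) (π' : ℕ → S → A → ℝ) (p' : ℕ → S → A → S → ℝ)
    (r' : ℕ → S → A → ℝ) : ℕ → S → ℝ
  | 0 => fun _ => 0
  | (j+1) => fun s => ∑ a, π' (H - j) s a *
      (r' (H - j) s a + ∑ s', p' (H - j) s a s' * valRem H π' p' r' j s')

/-- Truncated value `V̂_h(s) = ⟨Q̂_h(s,·), π_h(·|s)⟩` with `V̂_{H+1} ≡ 0`. -/
noncomputable def Vhat {S A : Type*} [Fintype S] [Fintype A]
    (H : ℕ) (π : ℕ → S → A → ℝ) (Qh : ℕ → S → A → ℝ) (h : ℕ) (s : S) : ℝ :=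
  if h ≤ H then ∑ a, π h s a * Qh h s a else 0

lemma step {S A : Type*} [Fintype S] [Fintype A] [DecidableEq S]
    (H : ℕ) (π π' : ℕ → S → A → ℝ) (p' : ℕ → S → A → S → ℝ)
    (r' : ℕ → S → A → ℝ) (Qh : ℕ → S → A → ℝ) (s1 : S) (k : ℕ) (hk : k + 1 ≤ H) :
    (∑ s, occup s1 π' p' k s * (valRem H π' p' r' (H - k) s - Vhat H π Qh (k+1) s))
    - (∑ s, occup s1 π' p' (k+1) s * (valRem H π' p' r' (H - (k+1)) s - Vhat H π Qh (k+2) s))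
    = (∑ s, occup s1 π' p' k s * ∑ a, Qh (k+1) s a * (π' (k+1) s a - π (k+1) s a))
    + (∑ s, ∑ a, occup s1 π' p' k s * π' (k+1) s a *
        (r' (k+1) s a + (∑ s', p' (k+1) s a s' * Vhat H π Qh (k+2) s') - Qh (k+1) s a)) := by
  have hj : H - k = (H - (k+1)) + 1 := by omega
  have hHj : H - (H - (k+1)) = k + 1 := by omega
  set j := H - (k+1) with hjdef
  rw [hj]
  have hV : ∀ s : S, Vhat H π Qh (k+1) s = ∑ a, π (k+1) s a * Qh (k+1) s a := by
    intro s; rw [Vhat, if_pos hk]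
  simp only [valRem, hHj, occup, hV]
  simp only [Finset.sum_sub_distrib, mul_sub, Finset.mul_sum, Finset.sum_mul,
    mul_add, Finset.sum_add_distrib, sub_mul, mul_sub]
  rw [show (∑ s' : S, ∑ s : S, ∑ a : A,
      occup s1 π' p' k s * π' (k+1) s a * p' (k+1) s a s' * valRem H π' p' r' j s') =
      ∑ s : S, ∑ a : A, ∑ s' : S,
      occup s1 π' p' k s * π' (k+1) s a * p' (k+1) s a s' * valRem H π' p' r' j s' from by
    rw [Finset.sum_comm]; congr 1; ext s; rw [Finset.sum_comm]]
  rw [show (∑ s' : S, ∑ s : S, ∑ a : A,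
      occup s1 π' p' k s * π' (k+1) s a * p' (k+1) s a s' * Vhat H π Qh (k+2) s') =
      ∑ s : S, ∑ a : A, ∑ s' : S,
      occup s1 π' p' k s * π' (k+1) s a * p' (k+1) s a s' * Vhat H π Qh (k+2) s' from by
    rw [Finset.sum_comm]; congr 1; ext s; rw [Finset.sum_comm]]
  ring_nf
  rw [show (∑ x : S, ∑ y : A, occup s1 π' p' k x * Qh (1+k) x y * π' (1+k) x y)
      = ∑ x : S, ∑ y : A, occup s1 π' p' k x * π' (1+k) x y * Qh (1+k) x y from by
    refine Finset.sum_congr rfl fun x _ => Finset.sum_congr rfl fun y _ => by ring,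
    show (∑ x : S, ∑ y : A, occup s1 π' p' k x * Qh (1+k) x y * π (1+k) x y)
      = ∑ x : S, ∑ y : A, occup s1 π' p' k x * π (1+k) x y * Qh (1+k) x y from by
    refine Finset.sum_congr rfl fun x _ => Finset.sum_congr rfl fun y _ => by ring]
  ring

/-- Extended value-difference lemma for finite-horizon MDPs:
`V_1^{π'}(s_1; r', p') − V̂_1(s_1)` decomposes into a policy-difference term and a
Bellman-residual term, both in expectation over trajectories of `(π', p')`. -/
theorem stmt12 {S A : Type*} [Fintype S] [Fintype A] [DecidableEq S]
    (H : ℕ) (hH : 1 ≤ H)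
    (π π' : ℕ → S → A → ℝ) (p' : ℕ → S → A → S → ℝ)
    (hπ : ∀ h s, (∀ a, 0 ≤ π h s a) ∧ ∑ a, π h s a = 1)
    (hπ' : ∀ h s, (∀ a, 0 ≤ π' h s a) ∧ ∑ a, π' h s a = 1)
    (hp' : ∀ h s a, (∀ s', 0 ≤ p' h s a s') ∧ ∑ s', p' h s a s' = 1)
    (r' : ℕ → S → A → ℝ) (Qh : ℕ → S → A → ℝ) (s1 : S) :
    valRem H π' p' r' H s1 - Vhat H π Qh 1 s1 =
      (∑ h ∈ Finset.Icc 1 H, ∑ s, occup s1 π' p' (h-1) s *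
        ∑ a, Qh h s a * (π' h s a - π h s a)) +
      (∑ h ∈ Finset.Icc 1 H, ∑ s, ∑ a, occup s1 π' p' (h-1) s * π' h s a *
        (r' h s a + (∑ s', p' h s a s' * Vhat H π Qh (h+1) s') - Qh h s a)) := by
  classical
  set g : ℕ → ℝ := fun k => ∑ s, occup s1 π' p' k s *
      (valRem H π' p' r' (H - k) s - Vhat H π Qh (k+1) s) with hg
  have hstep : ∀ h ∈ Finset.Icc 1 H,
      ((∑ s, occup s1 π' p' (h-1) s * ∑ a, Qh h s a * (π' h s a - π h s a))
      + (∑ s, ∑ a, occup s1 π' p' (h-1) s * π' h s a *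
        (r' h s a + (∑ s', p' h s a s' * Vhat H π Qh (h+1) s') - Qh h s a)))
      = g (h-1) - g h := by
    intro h hh
    simp only [Finset.mem_Icc] at hh
    obtain ⟨k, rfl⟩ : ∃ k, h = k + 1 := ⟨h-1, by omega⟩
    simpa [hg] using (step H π π' p' r' Qh s1 k (by omega)).symm
  rw [← Finset.sum_add_distrib, Finset.sum_congr rfl hstep]
  have htel : ∑ h ∈ Finset.Icc 1 H, (g (h-1) - g h) = g 0 - g H := by
    rw [← Finset.Ico_add_one_right_eq_Icc, Finset.sum_Ico_eq_sum_range]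
    simp only [Nat.succ_sub_one, Nat.add_sub_cancel_left, Nat.add_comm 1]
    exact Finset.sum_range_sub' g H
  rw [htel]
  have hg0 : g 0 = valRem H π' p' r' H s1 - Vhat H π Qh 1 s1 := by
    simp [hg, occup, ite_mul, Finset.sum_ite_eq']
  have hgH : g H = 0 := by
    simp [hg, valRem, Vhat, Nat.not_succ_le_self]
  rw [hg0, hgH, sub_zero]
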